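/- Let g = ḡ + Δg with ‖Δg‖ ≤ β, and let W, R be Hermitian positive-semidefinite N×N matrices, ξ ≥ 0, σ² > 0. The robust constraint 'g^H W g − ξ g^H R g − ξσ² ≤ 0 for all Δg with ‖Δg‖ ≤ β' holds if there exists η ≥ 0 such that the (N+1)×(N+1) matrix [[ηI, 0],[0, −ηβ² + ξσ²]] − B^H M B ⪰ 0, where M = W − ξR and B = [I, ḡ]. -/

import Mathlib

/-!
S-procedure, sufficiency direction. Evaluate the quadratic form of the positive semidefinite
block matrix at `v = [Δg; 1]`: since `B v = ḡ + Δg = g`, this gives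
`η ‖Δg‖² - η β² + ξ σ² - gᴴ M g ≥ 0`, and `η (‖Δg‖² - β²) ≤ 0` whenever `‖Δg‖ ≤ β` and `η ≥ 0`.
-/

open Matrix ComplexOrder

section QuadraticForm

variable {α : Type*} {m n : Type*} [Fintype m] [Fintype n]

theorem star_dotProduct_conjTranspose_mul_mul_mulVec [NonUnitalSemiring α] [StarRing α]
    (B : Matrix m n α) (M : Matrix m m α) (v : n → α) :
    star v ⬝ᵥ (Bᴴ * M * B) *ᵥ v = star (B *ᵥ v) ⬝ᵥ M *ᵥ (B *ᵥ v) := by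
  rw [Matrix.mul_assoc, ← mulVec_mulVec, ← mulVec_mulVec, dotProduct_mulVec, ← star_mulVec]

theorem star_sumElim_dotProduct_fromBlocks_mulVec [NonUnitalNonAssocSemiring α] [StarRing α]
    (A : Matrix m m α) (D : Matrix n n α) (x : m → α) (y : n → α) :
    star (Sum.elim x y) ⬝ᵥ fromBlocks A 0 0 D *ᵥ Sum.elim x y
      = star x ⬝ᵥ A *ᵥ x + star y ⬝ᵥ D *ᵥ y := by
  simp [fromBlocks_mulVec, Function.star_sumElim, sumElim_dotProduct_sumElim]

end QuadraticForm

theorem star_dotProduct_self_eq_sum_norm_sq {𝕜 n : Type*} [RCLike 𝕜] [Fintype n] (x : n → 𝕜) :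
    star x ⬝ᵥ x = ((∑ i, ‖x i‖ ^ 2 : ℝ) : 𝕜) := by
  simp [dotProduct, RCLike.conj_mul]

theorem Matrix.PosSemidef.re_star_dotProduct_mulVec_add_le {𝕜 n : Type*} [RCLike 𝕜] [Fintype n]
    [DecidableEq n] {M : Matrix n n 𝕜} {g₀ : n → 𝕜} {η c : ℝ}
    (hA : (fromBlocks ((η : 𝕜) • 1) 0 0 (of fun _ _ : Fin 1 => (c : 𝕜))
      - (fromCols (1 : Matrix n n 𝕜) (replicateCol (Fin 1) g₀))ᴴ * M
        * fromCols (1 : Matrix n n 𝕜) (replicateCol (Fin 1) g₀)).PosSemidef) (Δ : n → 𝕜) :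
    RCLike.re (star (g₀ + Δ) ⬝ᵥ M *ᵥ (g₀ + Δ)) ≤ η * ∑ i, ‖Δ i‖ ^ 2 + c := by
  set v : n ⊕ Fin 1 → 𝕜 := Sum.elim Δ fun _ => 1
  have hBv : fromCols (1 : Matrix n n 𝕜) (replicateCol (Fin 1) g₀) *ᵥ v = g₀ + Δ := by
    rw [fromCols_mulVec_sumElim, one_mulVec, add_comm]
    ext i
    simp [mulVec, dotProduct]
  have hc : star (fun _ => 1) ⬝ᵥ (of fun _ _ : Fin 1 => (c : 𝕜)) *ᵥ (fun _ => 1) = c := by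
    simp [mulVec, dotProduct]
  have hq := RCLike.nonneg_iff.mp (hA.dotProduct_mulVec_nonneg v) |>.1
  rw [sub_mulVec, dotProduct_sub, star_dotProduct_conjTranspose_mul_mul_mulVec, hBv,
    star_sumElim_dotProduct_fromBlocks_mulVec, smul_mulVec, one_mulVec, dotProduct_smul,
    star_dotProduct_self_eq_sum_norm_sq, hc, smul_eq_mul, ← RCLike.ofReal_mul] at hq
  simp only [map_sub, map_add, RCLike.ofReal_re, sub_nonneg] at hq
  linarith

theorem robust_leakage_lmi_general {N : ℕ} (gbar : Fin N → ℂ) (W R : Matrix (Fin N) (Fin N) ℂ)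
    (ξ σsq β : ℝ)
    (h : ∃ η : ℝ, 0 ≤ η ∧
      (Matrix.fromBlocks ((η : ℂ) • (1 : Matrix (Fin N) (Fin N) ℂ)) 0 0
          (Matrix.of fun (_ _ : Fin 1) => ((-η * β ^ 2 + ξ * σsq : ℝ) : ℂ))
        - (Matrix.of fun (i : Fin N) (j : Fin N ⊕ Fin 1) =>
            Sum.elim (fun j' => if i = j' then (1 : ℂ) else 0) (fun _ => gbar i) j)ᴴ
          * (W - (ξ : ℂ) • R)
          * (Matrix.of fun (i : Fin N) (j : Fin N ⊕ Fin 1) =>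
            Sum.elim (fun j' => if i = j' then (1 : ℂ) else 0) (fun _ => gbar i) j)).PosSemidef) :
    ∀ Δg : Fin N → ℂ, Real.sqrt (∑ n, ‖Δg n‖ ^ 2) ≤ β →
      (star (gbar + Δg) ⬝ᵥ W *ᵥ (gbar + Δg)).re
        - ξ * (star (gbar + Δg) ⬝ᵥ R *ᵥ (gbar + Δg)).re - ξ * σsq ≤ 0 := by
  obtain ⟨η, hη, hA⟩ := h
  intro Δg hΔg
  have hB : (Matrix.of fun (i : Fin N) (j : Fin N ⊕ Fin 1) =>
      Sum.elim (fun j' => if i = j' then (1 : ℂ) else 0) (fun _ => gbar i) j)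
      = fromCols 1 (replicateCol (Fin 1) gbar) := by
    ext i (j | j) <;> simp [one_apply]
  rw [hB] at hA
  set c := -η * β ^ 2 + ξ * σsq with hc
  have hS := hA.re_star_dotProduct_mulVec_add_le (c := c) Δg
  rw [sub_mulVec, dotProduct_sub, smul_mulVec, dotProduct_smul, smul_eq_mul] at hS
  simp only [RCLike.re_to_complex, Complex.sub_re, Complex.re_ofReal_mul] at hS
  have hΔβ : ∑ n, ‖Δg n‖ ^ 2 ≤ β ^ 2 := (Real.sqrt_le_iff.mp hΔg).2
  linarith [mul_le_mul_of_nonneg_left hΔβ hη]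

/-- LMI sufficiency for the robust information-leakage constraint (S-Procedure form). -/
theorem robust_leakage_lmi {N : ℕ} (gbar : Fin N → ℂ) (W R : Matrix (Fin N) (Fin N) ℂ)
    (hW : W.PosSemidef) (hR : R.PosSemidef) (ξ σsq β : ℝ) (hξ : 0 ≤ ξ) (hσ : 0 < σsq)
    (h : ∃ η : ℝ, 0 ≤ η ∧
      (Matrix.fromBlocks ((η : ℂ) • (1 : Matrix (Fin N) (Fin N) ℂ)) 0 0
          (Matrix.of fun (_ _ : Fin 1) => ((-η * β ^ 2 + ξ * σsq : ℝ) : ℂ))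
        - (Matrix.of fun (i : Fin N) (j : Fin N ⊕ Fin 1) =>
            Sum.elim (fun j' => if i = j' then (1 : ℂ) else 0) (fun _ => gbar i) j)ᴴ
          * (W - (ξ : ℂ) • R)
          * (Matrix.of fun (i : Fin N) (j : Fin N ⊕ Fin 1) =>
            Sum.elim (fun j' => if i = j' then (1 : ℂ) else 0) (fun _ => gbar i) j)).PosSemidef) :
    ∀ Δg : Fin N → ℂ, Real.sqrt (∑ n, ‖Δg n‖ ^ 2) ≤ β →
      (star (gbar + Δg) ⬝ᵥ W *ᵥ (gbar + Δg)).re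
        - ξ * (star (gbar + Δg) ⬝ᵥ R *ᵥ (gbar + Δg)).re - ξ * σsq ≤ 0 :=
  robust_leakage_lmi_general gbar W R ξ σsq β h
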